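/- Under the hypotheses 0<p<1, δ,σ,μ>0, G ≤ μ < A (with G, A, a, b, c, K as defined), for every k ∈ [0, K] one has b(k)² - 4a(k)c(k) ≥ 0, b(k) - 4δk > 0, and (1-p)/p - k > 0. -/

import Mathlib

/-!
Put `X = (A - (1-p)μ)k - (1-p)μ` and `Y = pk - (1-p)`. The definitions of `A` and `G` amount to
`2pA = 2δ + p(1-p)σ²` and `pG² = 2δ(1-p)σ²`, under which `b(k) - 4δk = -2pX` and
`b(k)² - 4a(k)c(k) = 4p²(X - GY)(X + GY)`. Since `X - GY = (A - μ + p(μ - G))k - (1-p)(μ - G)`,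
the condition `k ≤ K` says exactly `X - GY ≤ 0`, and it also forces `pk < 1 - p`, i.e. `Y < 0`.
As `G > 0`, this gives `X ≤ GY < 0`, so both factors of the discriminant are nonpositive.
-/

section

variable {p δ σ μ A G : ℝ}

lemma b_sub_four_mul_eq (hA : 2 * p * A = 2 * δ + p * (1 - p) * σ ^ 2) (k : ℝ) :
    (2 * δ + p * (1 - p) * (2 * μ - σ ^ 2)) * k + 2 * p * (1 - p) * μ - 4 * δ * k
      = -2 * p * ((A - (1 - p) * μ) * k - (1 - p) * μ) := by
  linear_combination k * hA

lemma discriminant_eq_mul (hA : 2 * p * A = 2 * δ + p * (1 - p) * σ ^ 2)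
    (hG : p * G ^ 2 = 2 * δ * (1 - p) * σ ^ 2) (k : ℝ) :
    ((2 * δ + p * (1 - p) * (2 * μ - σ ^ 2)) * k + 2 * p * (1 - p) * μ) ^ 2
      - 4 * (2 * p * δ * (1 + k))
        * ((1 - p) * (2 * μ + (p ^ 2 - 1) * σ ^ 2) * k + (1 - p) ^ 3 * σ ^ 2)
      = 4 * p ^ 2 * ((((A - (1 - p) * μ) * k - (1 - p) * μ) - G * (p * k - (1 - p)))
        * (((A - (1 - p) * μ) * k - (1 - p) * μ) + G * (p * k - (1 - p)))) := by
  linear_combination 4 * p * (p * k - (1 - p)) ^ 2 * hG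
    - k * (2 * p * ((A - (1 - p) * μ) * k - (1 - p) * μ)
      + ((2 * δ + p * (1 - p) * σ ^ 2) * k - 2 * p * (1 - p) * μ * k - 2 * p * (1 - p) * μ)) * hA

lemma mul_lt_one_sub_of_le_div {k : ℝ} (hp : 0 < p) (hp1 : p < 1) (hGμ : G ≤ μ) (hμA : μ < A)
    (hk : k ≤ (1 - p) * (μ - G) / ((A - μ) + p * (μ - G))) :
    p * k < 1 - p := by
  have hD : 0 < (A - μ) + p * (μ - G) := by nlinarith
  rw [le_div_iff₀ hD] at hk
  nlinarith [mul_le_mul_of_nonneg_left hk hp.le]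

end

theorem stmt9_general (p δ σ μ G A K : ℝ) (a b c : ℝ → ℝ)
    (hp : 0 < p) (hp1 : p < 1) (hδ : 0 < δ) (hσ : 0 < σ)
    (hG : G = Real.sqrt (2 * δ * (1 - p) * σ ^ 2 / p))
    (hA : A = δ / p + (1 - p) * σ ^ 2 / 2)
    (hGμ : G ≤ μ) (hμA : μ < A)
    (ha : ∀ k, a k = 2 * p * δ * (1 + k))
    (hb : ∀ k, b k = (2 * δ + p * (1 - p) * (2 * μ - σ ^ 2)) * k + 2 * p * (1 - p) * μ)
    (hc : ∀ k, c k = (1 - p) * (2 * μ + (p ^ 2 - 1) * σ ^ 2) * k + (1 - p) ^ 3 * σ ^ 2)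
    (hK : K = (1 - p) * (μ - G) / ((A - μ) + p * (μ - G))) :
    ∀ k ∈ Set.Icc (0 : ℝ) K,
      0 ≤ (b k) ^ 2 - 4 * a k * c k ∧ 0 < b k - 4 * δ * k ∧ 0 < (1 - p) / p - k := by
  rintro k ⟨-, hkK⟩
  rw [hK] at hkK
  have hq : 0 < 1 - p := by linarith
  have hA' : 2 * p * A = 2 * δ + p * (1 - p) * σ ^ 2 := by rw [hA]; field_simp
  have hG' : p * G ^ 2 = 2 * δ * (1 - p) * σ ^ 2 := by
    rw [hG, Real.sq_sqrt (by positivity)]; field_simp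
  have hGpos : 0 < G := hG ▸ Real.sqrt_pos.mpr (by positivity)
  have hY : p * k - (1 - p) < 0 := by linarith [mul_lt_one_sub_of_le_div hp hp1 hGμ hμA hkK]
  have hXsub : ((A - (1 - p) * μ) * k - (1 - p) * μ) - G * (p * k - (1 - p)) ≤ 0 := by
    rw [le_div_iff₀ (by nlinarith)] at hkK
    linarith
  have hGY : G * (p * k - (1 - p)) < 0 := mul_neg_of_pos_of_neg hGpos hY
  have hX : (A - (1 - p) * μ) * k - (1 - p) * μ < 0 := by linarith
  refine ⟨?_, ?_, ?_⟩
  · rw [ha, hb, hc, discriminant_eq_mul hA' hG']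
    exact mul_nonneg (by positivity) (mul_nonneg_of_nonpos_of_nonpos hXsub (by linarith))
  · rw [hb, b_sub_four_mul_eq hA']
    exact mul_pos_of_neg_of_neg (by linarith) hX
  · rw [sub_pos, lt_div_iff₀ hp]
    linarith

/-- For `0 < p < 1`, `δ, σ, μ > 0` and `G ≤ μ < A`, one has, for every `k ∈ [0, K]`:
`b(k)² - 4a(k)c(k) ≥ 0`, `b(k) - 4δk > 0` and `(1-p)/p - k > 0`. -/
theorem stmt9 (p δ σ μ G A K : ℝ) (a b c : ℝ → ℝ)
    (hp : 0 < p) (hp1 : p < 1) (hδ : 0 < δ) (hσ : 0 < σ) (hμ : 0 < μ)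
    (hG : G = Real.sqrt (2 * δ * (1 - p) * σ ^ 2 / p))
    (hA : A = δ / p + (1 - p) * σ ^ 2 / 2)
    (hGμ : G ≤ μ) (hμA : μ < A)
    (ha : ∀ k, a k = 2 * p * δ * (1 + k))
    (hb : ∀ k, b k = (2 * δ + p * (1 - p) * (2 * μ - σ ^ 2)) * k + 2 * p * (1 - p) * μ)
    (hc : ∀ k, c k = (1 - p) * (2 * μ + (p ^ 2 - 1) * σ ^ 2) * k + (1 - p) ^ 3 * σ ^ 2)
    (hK : K = (1 - p) * (μ - G) / ((A - μ) + p * (μ - G))) :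
    ∀ k ∈ Set.Icc (0 : ℝ) K,
      0 ≤ (b k) ^ 2 - 4 * a k * c k ∧ 0 < b k - 4 * δ * k ∧ 0 < (1 - p) / p - k :=
  stmt9_general p δ σ μ G A K a b c hp hp1 hδ hσ hG hA hGμ hμA ha hb hc hK
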